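/- arXiv:1602.06744 — 2 statements merged into one kernel-verified Lean document; each statement's English description precedes it below -/
import Mathlib

section
/- The product of the four roots (with multiplicity) of the degree-4 characteristic polynomial f(λ) = det(λH + S), after normalizing f to be monic up to sign, equals −a⁴c²r² < 0; equivalently, the constant coefficient of the monic polynomial a⁴c²·f(λ) is −a⁴c²r². Consequently f has at least one positive real root. -/
open Matrix Polynomial

noncomputable def Hmat (a c : ℝ) : Matrix (Fin 4) (Fin 4) ℝ :=
  !![1/a^2, 0, 0, 0; 0, 1/a^2, 0, 0; 0, 0, -(1/c^2), 0; 0, 0, 0, -1]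

noncomputable def Smat (r xc yc zc : ℝ) : Matrix (Fin 4) (Fin 4) ℝ :=
  !![1, 0, 0, -xc; 0, 1, 0, -yc; 0, 0, 1, -zc;
     -xc, -yc, -zc, xc^2 + yc^2 + zc^2 - r^2]

/-- `f(λ) = det (λ H + S)` as a function of `λ`. -/
noncomputable def fval (a c r xc yc zc l : ℝ) : ℝ :=
  (l • Hmat a c + Smat r xc yc zc).det

/-- `f(λ) = det (λ H + S)` as a polynomial in `λ`. -/
noncomputable def fpoly (a c r xc yc zc : ℝ) : Polynomial ℝ :=
  ((X : Polynomial ℝ) • (Hmat a c).map C + (Smat r xc yc zc).map C).det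


/-! The constant coefficient of `det (λ H + S)` is `det S = -r^2`: in the Schur complement of the
identity block of `S` the centre terms `xc^2 + yc^2 + zc^2` cancel. So `f(0) < 0`, while the
factorisation `fval_eq` shows `f(λ) > 0` as soon as `λ / c^2 - 1 > zc^2` and
`λ + r^2 - (xc^2 + yc^2 + zc^2) > 1`; the intermediate value theorem gives a root in between. -/

theorem Matrix.eval_det_X_smul_map_C_add {R n : Type*} [CommRing R] [Fintype n] [DecidableEq n]
    (A B : Matrix n n R) (t : R) :
    ((X : R[X]) • A.map C + B.map C).det.eval t = (t • A + B).det := by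
  rw [← coe_evalRingHom, RingHom.map_det]
  congr 1
  ext i j
  rw [RingHom.mapMatrix_apply]
  simp only [coe_evalRingHom, map_apply, add_apply, smul_apply, smul_eq_mul, X_mul_C, eval_add,
    eval_mul, eval_C, eval_X]
  ring

lemma fpoly_eval (a c r xc yc zc l : ℝ) : (fpoly a c r xc yc zc).eval l = fval a c r xc yc zc l :=
  Matrix.eval_det_X_smul_map_C_add _ _ l

lemma det_Smat (r xc yc zc : ℝ) : (Smat r xc yc zc).det = -r^2 := by
  simp [Smat, Matrix.det_succ_row_zero, Fin.sum_univ_succ, Fin.succAbove]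
  ring

lemma fval_zero (a c r xc yc zc : ℝ) : fval a c r xc yc zc 0 = -r^2 := by
  rw [fval, zero_smul, zero_add, det_Smat]

lemma fval_eq (a c r xc yc zc l : ℝ) :
    fval a c r xc yc zc l = (l / a^2 + 1) * ((l / a^2 + 1) *
      ((l / c^2 - 1) * (l + r^2 - (xc^2 + yc^2 + zc^2)) - zc^2)
        + (l / c^2 - 1) * (xc^2 + yc^2)) := by
  simp [fval, Hmat, Smat, Matrix.det_succ_row_zero, Fin.sum_univ_succ, Fin.succAbove]
  ring

lemma fval_pos (a c r xc yc zc : ℝ) (hc : c ≠ 0) :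
    0 < fval a c r xc yc zc ((c^2 + 1) * (xc^2 + yc^2 + zc^2 + 1)) := by
  set s := xc^2 + yc^2 + zc^2
  set L := (c^2 + 1) * (s + 1)
  have hLc : L / c^2 - 1 = s + (s + 1) / c^2 := by
    field_simp; ring
  have hzc : zc^2 < L / c^2 - 1 := by
    have : 0 < (s + 1) / c^2 := by positivity
    rw [hLc]; simp only [s]; nlinarith [sq_nonneg xc, sq_nonneg yc]
  have hrad : 1 < L + r^2 - s := by
    have : 0 < c^2 * (s + 1) := by positivity
    simp only [L]; nlinarith [sq_nonneg r]
  have hquad : 0 < (L / c^2 - 1) * (L + r^2 - s) - zc^2 := by nlinarith [sq_nonneg zc]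
  have : 0 ≤ L / c^2 - 1 := by linarith [sq_nonneg zc]
  rw [fval_eq]
  positivity

lemma exists_pos_fval_eq_zero (a c r xc yc zc : ℝ) (hc : c ≠ 0) (hr : r ≠ 0) :
    ∃ l : ℝ, 0 < l ∧ fval a c r xc yc zc l = 0 := by
  have hcont : Continuous (fval a c r xc yc zc) := by
    simpa only [fpoly_eval] using (fpoly a c r xc yc zc).continuous
  have hmem : (0 : ℝ) ∈ Set.Ioc (fval a c r xc yc zc 0)
      (fval a c r xc yc zc ((c^2 + 1) * (xc^2 + yc^2 + zc^2 + 1))) :=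
    ⟨by rw [fval_zero]; exact neg_lt_zero.mpr (by positivity), (fval_pos a c r xc yc zc hc).le⟩
  obtain ⟨l, hl, hfl⟩ := intermediate_value_Ioc (by positivity) hcont.continuousOn hmem
  exact ⟨l, hl.1, hfl⟩

theorem stmt2 (a c r xc yc zc : ℝ) (ha : 0 < a) (hc : 0 < c) (hr : 0 < r) :
    ((C (a^4 * c^2)) * fpoly a c r xc yc zc).coeff 0 = -(a^4 * c^2 * r^2) ∧
    -(a^4 * c^2 * r^2) < 0 ∧
    ∃ l : ℝ, 0 < l ∧ fval a c r xc yc zc l = 0 := by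
  refine ⟨?_, neg_neg_of_pos (by positivity), exists_pos_fval_eq_zero a c r xc yc zc hc.ne' hr.ne'⟩
  rw [coeff_C_mul, coeff_zero_eq_eval_zero, fpoly_eval, fval_zero, mul_neg]
end

section
/- Let λ ∉ {−a², c²} be a real root of f(λ) = det(λH + S). Then rank(λH + S) = 3, so the eigenspace ker(λ·I + H⁻¹S) is one-dimensional. -/
/-!
`M = λH + S` is an arrowhead matrix: its first three rows have nonzero entries only on the
diagonal and in the last column, and the diagonal entries `1 + λ/a², 1 + λ/a², 1 - λ/c²`
do not vanish because `λ ∉ {-a², c²}`. Hence a kernel vector is determined by its last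
coordinate, so `dim ker M ≤ 1`, while `det M = 0` gives `dim ker M ≥ 1`; thus
`rank M = 3`. Finally `λI + H⁻¹S = H⁻¹M` has the same kernel as `M`.
-/

open Matrix Polynomial

namespace Matrix

variable {K : Type*} [Field K]

theorem rank_add_finrank_ker_toLin' {m n : Type*} [Fintype n] [DecidableEq n]
    (A : Matrix m n K) :
    A.rank + Module.finrank K (LinearMap.ker (toLin' A)) = Fintype.card n := by
  rw [← Module.finrank_fintype_fun_eq_card K,
    ← LinearMap.finrank_range_add_finrank_ker (toLin' A)]
  rfl

theorem finrank_ker_toLin'_pos_of_det_eq_zero {n : Type*} [Fintype n] [DecidableEq n]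
    {A : Matrix n n K} (h : A.det = 0) : 0 < Module.finrank K (LinearMap.ker (toLin' A)) := by
  obtain ⟨v, hv, hAv⟩ := exists_mulVec_eq_zero_iff.mpr h
  exact Module.finrank_pos_iff_exists_ne_zero.mpr
    ⟨⟨v, hAv⟩, fun h => hv (congrArg Subtype.val h)⟩

theorem smul_one_add_inv_mul_eq_inv_mul {n : Type*} [Fintype n] [DecidableEq n]
    {H : Matrix n n K} (hH : IsUnit H.det) (S : Matrix n n K) (l : K) :
    l • (1 : Matrix n n K) + H⁻¹ * S = H⁻¹ * (l • H + S) := by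
  rw [Matrix.mul_add, Matrix.mul_smul, nonsing_inv_mul _ hH]

theorem finrank_ker_toLin'_mul_of_isUnit_det {m n : Type*} [Fintype m] [DecidableEq m]
    [Fintype n] [DecidableEq n] {A : Matrix m m K} (hA : IsUnit A.det) (B : Matrix m n K) :
    Module.finrank K (LinearMap.ker (toLin' (A * B))) =
      Module.finrank K (LinearMap.ker (toLin' B)) := by
  have hAB := (A * B).rank_add_finrank_ker_toLin'
  rw [rank_mul_eq_right_of_isUnit_det A B hA, ← B.rank_add_finrank_ker_toLin'] at hAB
  omega

def IsArrowhead {n : ℕ} (A : Matrix (Fin (n + 1)) (Fin (n + 1)) K) : Prop :=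
  ∀ i j, i ≠ j → i ≠ Fin.last n → j ≠ Fin.last n → A i j = 0

theorem IsArrowhead.finrank_ker_toLin'_le_one {n : ℕ} {A : Matrix (Fin (n + 1)) (Fin (n + 1)) K}
    (hA : A.IsArrowhead) (hdiag : ∀ i, i ≠ Fin.last n → A i i ≠ 0) :
    Module.finrank K (LinearMap.ker (toLin' A)) ≤ 1 := by
  let f := (LinearMap.proj (R := K) (φ := fun _ : Fin (n + 1) => K) (Fin.last n)).comp
    (LinearMap.ker (toLin' A)).subtype
  have hf : Function.Injective f := by
    rw [← LinearMap.ker_eq_bot, LinearMap.ker_eq_bot']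
    rintro ⟨v, hv⟩ hlast
    replace hv : A *ᵥ v = 0 := hv
    replace hlast : v (Fin.last n) = 0 := hlast
    ext i
    by_cases hi : i = Fin.last n
    · simpa [hi] using hlast
    have hrow : A i i * v i = 0 := by
      have hvi := congrFun hv i
      rwa [mulVec, dotProduct, Finset.sum_eq_single i] at hvi
      · rintro j - hji
        by_cases hj : j = Fin.last n
        · simp [hj, hlast]
        · simp [hA i j (Ne.symm hji) hi hj]
      · simp
    simpa [hdiag i hi] using hrow
  simpa using LinearMap.finrank_le_finrank_of_injective hf

theorem IsArrowhead.finrank_ker_toLin'_eq_one_of_det_eq_zero {n : ℕ}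
    {A : Matrix (Fin (n + 1)) (Fin (n + 1)) K} (hA : A.IsArrowhead)
    (hdiag : ∀ i, i ≠ Fin.last n → A i i ≠ 0) (hdet : A.det = 0) :
    Module.finrank K (LinearMap.ker (toLin' A)) = 1 :=
  le_antisymm (hA.finrank_ker_toLin'_le_one hdiag) (finrank_ker_toLin'_pos_of_det_eq_zero hdet)

end Matrix

theorem det_Hmat (a c : ℝ) : (Hmat a c).det = 1 / (a ^ 4 * c ^ 2) := by
  simp [Hmat, det_succ_row_zero, Fin.sum_univ_succ]
  ring

theorem isArrowhead_smul_Hmat_add_Smat (a c r xc yc zc l : ℝ) :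
    (l • Hmat a c + Smat r xc yc zc).IsArrowhead := by
  intro i j hij hi hj
  fin_cases i <;> fin_cases j <;> simp_all [Hmat, Smat]

theorem smul_Hmat_add_Smat_diag_ne_zero {a c l : ℝ} (r xc yc zc : ℝ) (ha : a ≠ 0)
    (hc : c ≠ 0) (h1 : l ≠ -a ^ 2) (h2 : l ≠ c ^ 2) (i : Fin 4) (hi : i ≠ Fin.last 3) :
    (l • Hmat a c + Smat r xc yc zc) i i ≠ 0 := by
  fin_cases i <;> simp [Hmat, Smat] at hi ⊢ <;> field_simp <;> intro h
  all_goals first | exact h1 (by linarith) | exact h2 (by linarith)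

theorem stmt16_general (a c r xc yc zc l : ℝ) (ha : 0 < a) (hc : 0 < c)
    (hroot : fval a c r xc yc zc l = 0) (h1 : l ≠ -a^2) (h2 : l ≠ c^2) :
    (l • Hmat a c + Smat r xc yc zc).rank = 3 ∧
    Module.finrank ℝ
      (LinearMap.ker (Matrix.toLin'
        (l • (1 : Matrix (Fin 4) (Fin 4) ℝ) + (Hmat a c)⁻¹ * Smat r xc yc zc))) = 1 := by
  have hH : IsUnit (Hmat a c).det := isUnit_iff_ne_zero.mpr (by rw [det_Hmat]; positivity)
  rw [smul_one_add_inv_mul_eq_inv_mul hH]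
  set M := l • Hmat a c + Smat r xc yc zc
  have hker : Module.finrank ℝ (LinearMap.ker (toLin' M)) = 1 :=
    (isArrowhead_smul_Hmat_add_Smat a c r xc yc zc l).finrank_ker_toLin'_eq_one_of_det_eq_zero
      (smul_Hmat_add_Smat_diag_ne_zero r xc yc zc ha.ne' hc.ne' h1 h2) hroot
  have hrank := M.rank_add_finrank_ker_toLin'
  rw [hker, Fintype.card_fin] at hrank
  rw [finrank_ker_toLin'_mul_of_isUnit_det (isUnit_nonsing_inv_det _ hH)]
  exact ⟨by omega, hker⟩

theorem stmt16 (a c r xc yc zc l : ℝ) (ha : 0 < a) (hc : 0 < c) (hr : 0 < r)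
    (hroot : fval a c r xc yc zc l = 0) (h1 : l ≠ -a^2) (h2 : l ≠ c^2) :
    (l • Hmat a c + Smat r xc yc zc).rank = 3 ∧
    Module.finrank ℝ
      (LinearMap.ker (Matrix.toLin'
        (l • (1 : Matrix (Fin 4) (Fin 4) ℝ) + (Hmat a c)⁻¹ * Smat r xc yc zc))) = 1 :=
  stmt16_general a c r xc yc zc l ha hc hroot h1 h2
end
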